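/- arXiv:2601.15343 — 3 statements merged into one kernel-verified Lean document; each statement's English description precedes it below -/
import Mathlib

section
/- Let H be a real Hilbert space, F : H → ℝ with gradient ∇F everywhere, Γ > 0, λ > 0, and p ∈ H with ∇F(p) = 0. Suppose ⟨∇F(x), x − p⟩ ≥ λ·‖x − p‖² for all x ∈ H. If σ : ℝ → H is differentiable with σ'(t) = −Γ·∇F(σ(t)) for all t ≥ 0, then ‖σ(t) − p‖ ≤ e^{−Γλt}·‖σ(0) − p‖ for all t ≥ 0. -/
open Real

/-! Along the flow, `d/dt ‖σ - p‖² = -2Γ⟪∇F(σ), σ - p⟫ ≤ -2Γλ‖σ - p‖²`, so Grönwall's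
inequality makes the squared distance decay like `e^{-2Γλt}`. -/

theorem le_mul_exp_of_hasDerivAt_le_mul {φ φ' : ℝ → ℝ} {K : ℝ}
    (hφ : ∀ t, 0 ≤ t → HasDerivAt φ (φ' t) t) (hbound : ∀ t, 0 ≤ t → φ' t ≤ K * φ t)
    {t : ℝ} (ht : 0 ≤ t) : φ t ≤ φ 0 * exp (K * t) := by
  have hcont : ContinuousOn φ (Set.Icc 0 t) := fun s hs =>
    (hφ s hs.1).continuousAt.continuousWithinAt
  have hgronwall := le_gronwallBound_of_liminf_deriv_right_le (ε := 0) hcont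
    (fun s hs _ hr => (hφ s hs.1).hasDerivWithinAt.liminf_right_slope_le hr) le_rfl
    (fun s hs => by simpa using hbound s hs.1) t ⟨ht, le_rfl⟩
  simpa [gronwallBound_ε0] using hgronwall

theorem norm_sub_le_exp_mul_of_inner_deriv_le {E : Type*} [NormedAddCommGroup E]
    [InnerProductSpace ℝ E] {σ v : ℝ → E} {p : E} {c : ℝ}
    (hσ : ∀ t, 0 ≤ t → HasDerivAt σ (v t) t)
    (hv : ∀ t, 0 ≤ t → inner ℝ (σ t - p) (v t) ≤ -c * ‖σ t - p‖ ^ 2)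
    {t : ℝ} (ht : 0 ≤ t) : ‖σ t - p‖ ≤ exp (-(c * t)) * ‖σ 0 - p‖ := by
  have hsq : ‖σ t - p‖ ^ 2 ≤ ‖σ 0 - p‖ ^ 2 * exp (-2 * c * t) :=
    le_mul_exp_of_hasDerivAt_le_mul (fun s hs => ((hσ s hs).sub_const p).norm_sq)
      (fun s hs => by linarith [hv s hs]) ht
  have hexp : exp (-2 * c * t) = exp (-(c * t)) ^ 2 := by
    rw [← exp_nat_mul]; ring_nf
  rw [hexp, ← mul_pow, mul_comm] at hsq
  exact (pow_le_pow_iff_left₀ (norm_nonneg _) (by positivity) two_ne_zero).mp hsq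

theorem exponential_stability_gradient_flow_general
    {H : Type*} [NormedAddCommGroup H] [InnerProductSpace ℝ H]
    (g : H → H)
    (Γ lam : ℝ) (hΓ : 0 < Γ)
    (p : H)
    (hmono : ∀ x : H, inner ℝ (g x) (x - p) ≥ lam * ‖x - p‖ ^ 2)
    (σ : ℝ → H) (hflow : ∀ t : ℝ, 0 ≤ t → HasDerivAt σ (-(Γ • g (σ t))) t) :
    ∀ t : ℝ, 0 ≤ t → ‖σ t - p‖ ≤ Real.exp (-(Γ * lam * t)) * ‖σ 0 - p‖ := by
  refine fun t ht => norm_sub_le_exp_mul_of_inner_deriv_le hflow (fun s _ => ?_) ht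
  rw [inner_neg_right, real_inner_smul_right, real_inner_comm]
  linarith [mul_le_mul_of_nonneg_left (hmono (σ s)) hΓ.le]

/-- Exponential stability of a strictly stable equilibrium: if `∇F(p) = 0` and
`⟨∇F(x), x − p⟩ ≥ λ‖x − p‖²` for all `x`, then every gradient-flow trajectory
`σ' = −Γ∇F(σ)` satisfies `‖σ(t) − p‖ ≤ e^{−Γλt}‖σ(0) − p‖` for `t ≥ 0`. -/
theorem exponential_stability_gradient_flow
    {H : Type*} [NormedAddCommGroup H] [InnerProductSpace ℝ H] [CompleteSpace H]
    (F : H → ℝ) (g : H → H) (hgrad : ∀ x, HasGradientAt F (g x) x)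
    (Γ lam : ℝ) (hΓ : 0 < Γ) (hlam : 0 < lam)
    (p : H) (hp : g p = 0)
    (hmono : ∀ x : H, inner ℝ (g x) (x - p) ≥ lam * ‖x - p‖ ^ 2)
    (σ : ℝ → H) (hflow : ∀ t : ℝ, 0 ≤ t → HasDerivAt σ (-(Γ • g (σ t))) t) :
    ∀ t : ℝ, 0 ≤ t → ‖σ t - p‖ ≤ Real.exp (-(Γ * lam * t)) * ‖σ 0 - p‖ :=
  exponential_stability_gradient_flow_general g Γ lam hΓ p hmono σ hflow
end

section
/- Let H be a real Hilbert space, F : H → ℝ bounded below with continuous gradient ∇F : H → H, Γ > 0, and let σ : ℝ → H be a differentiable curve with σ'(t) = −Γ·∇F(σ(t)) for all t ≥ 0. If the orbit {σ(t) : t ≥ 0} is relatively compact in H, then there exist a sequence t_n → ∞ and a point η ∈ H with σ(t_n) → η in H and ∇F(η) = 0. -/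
open Filter Topology Set

/-!
Along the flow the energy `F ∘ σ` decreases at rate `Γ ‖∇F(σ t)‖²`. As `F` is bounded below,
this rate cannot stay above any `ε > 0` for all large times, so `0` is a cluster value of
`∇F(σ t)` as `t → ∞`. Compactness of the orbit turns times with small gradient into a
convergent sequence `σ(tₙ) → η`, and continuity of `∇F` gives `∇F(η) = 0`.
-/

theorem HasGradientAt.comp_hasDerivAt {H : Type*} [NormedAddCommGroup H] [InnerProductSpace ℝ H]
    [CompleteSpace H] {F : H → ℝ} {σ : ℝ → H} {v w : H} {t : ℝ}
    (hF : HasGradientAt F v (σ t)) (hσ : HasDerivAt σ w t) :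
    HasDerivAt (F ∘ σ) (inner ℝ v w) t := by
  simpa using hF.hasFDerivAt.comp_hasDerivAt t hσ

theorem frequently_neg_lt_deriv_of_bddBelow {φ φ' : ℝ → ℝ} {a : ℝ}
    (hφ : ∀ t, a ≤ t → HasDerivAt φ (φ' t) t) (hbdd : BddBelow (range φ))
    {ε : ℝ} (hε : 0 < ε) : ∃ᶠ t in atTop, -ε < φ' t := by
  rw [frequently_atTop]
  intro b
  by_contra! hslow
  obtain ⟨m, hm⟩ := hbdd
  set c := max a b
  have hderiv : ∀ t ∈ Ici c, HasDerivAt φ (φ' t) t := fun t ht =>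
    hφ t ((le_max_left a b).trans ht)
  have hdecay : ∀ t ∈ Ici c, φ t - φ c ≤ -ε * (t - c) := fun t ht =>
    (convex_Ici c).image_sub_le_mul_sub_of_deriv_le
      (fun t ht => (hderiv t ht).continuousAt.continuousWithinAt)
      (fun t ht => (hderiv t (interior_subset ht)).differentiableAt.differentiableWithinAt)
      (fun t ht => (hderiv t (interior_subset ht)).deriv ▸
        hslow t ((le_max_right a b).trans (interior_subset ht)))
      c self_mem_Ici t ht ht
  set T := c + (φ c - m + 1) / ε
  have hT : c ≤ T := le_add_of_nonneg_right (div_nonneg (by linarith [hm (mem_range_self c)]) hε.le)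
  have hdrop : -ε * (T - c) = -(φ c - m + 1) := by
    simp only [T, add_sub_cancel_left]
    field_simp
  linarith [hdecay T hT, hm (mem_range_self T)]

theorem mapClusterPt_zero_of_gradient_flow {H : Type*} [NormedAddCommGroup H]
    [InnerProductSpace ℝ H] [CompleteSpace H] {F : H → ℝ} (hbdd : BddBelow (range F))
    {g : H → H} (hgrad : ∀ x, HasGradientAt F (g x) x) {Γ : ℝ} (hΓ : 0 < Γ) {σ : ℝ → H}
    (hflow : ∀ t : ℝ, 0 ≤ t → HasDerivAt σ (-(Γ • g (σ t))) t) :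
    MapClusterPt 0 atTop (g ∘ σ) := by
  have hdissip : ∀ t, 0 ≤ t → HasDerivAt (F ∘ σ) (-(Γ * ‖g (σ t)‖ ^ 2)) t := fun t ht => by
    simpa [inner_smul_right, real_inner_self_eq_norm_sq] using
      (hgrad (σ t)).comp_hasDerivAt (hflow t ht)
  rw [Metric.nhds_basis_ball.mapClusterPt_iff_frequently]
  intro ε hε
  refine (frequently_neg_lt_deriv_of_bddBelow hdissip (hbdd.mono (range_comp_subset_range σ F))
    (mul_pos hΓ (pow_pos hε 2))).mono fun t ht => ?_
  rw [Function.comp_apply, mem_ball_zero_iff]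
  have hsq : ‖g (σ t)‖ ^ 2 < ε ^ 2 := lt_of_mul_lt_mul_left (neg_lt_neg_iff.1 ht) hΓ.le
  exact lt_of_pow_lt_pow_left₀ 2 hε.le hsq

theorem exists_seq_tendsto_of_mapClusterPt_comp {ι X Y : Type*} [TopologicalSpace X]
    [FirstCountableTopology X] [TopologicalSpace Y] [FirstCountableTopology Y] [T2Space Y]
    {l : Filter ι} [l.IsCountablyGenerated] {u : ι → X} {f : X → Y} {K : Set X} {y : Y}
    (hK : IsCompact K) (huK : ∀ᶠ i in l, u i ∈ K) (hf : Continuous f)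
    (hy : MapClusterPt y l (f ∘ u)) :
    ∃ (ψ : ℕ → ι) (η : X), Tendsto ψ atTop l ∧ Tendsto (u ∘ ψ) atTop (𝓝 η) ∧ f η = y := by
  obtain ⟨ψ, hfψ, hψ⟩ := hy.exists_seq_tendsto
  obtain ⟨η, -, φ, hφ, hη⟩ := hK.tendsto_subseq' (hψ.eventually huK).frequently
  refine ⟨ψ ∘ φ, η, hψ.comp hφ.tendsto_atTop, hη, ?_⟩
  exact tendsto_nhds_unique ((hf.tendsto η).comp hη) (hfψ.comp hφ.tendsto_atTop)

/-- Stationarity in the ω-limit set: if `F` is bounded below with continuous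
gradient `g = ∇F`, `σ' = −Γ∇F(σ)` for `t ≥ 0`, and the orbit `{σ(t) : t ≥ 0}` is
relatively compact, then some sequence `σ(tₙ)` with `tₙ → ∞` converges to a
critical point `η` of `F`. -/
theorem omega_limit_contains_critical_point
    {H : Type*} [NormedAddCommGroup H] [InnerProductSpace ℝ H] [CompleteSpace H]
    (F : H → ℝ) (hbdd : BddBelow (Set.range F))
    (g : H → H) (hgrad : ∀ x, HasGradientAt F (g x) x) (hgcont : Continuous g)
    (Γ : ℝ) (hΓ : 0 < Γ)
    (σ : ℝ → H) (hflow : ∀ t : ℝ, 0 ≤ t → HasDerivAt σ (-(Γ • g (σ t))) t)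
    (hcompact : IsCompact (closure (σ '' Set.Ici (0 : ℝ)))) :
    ∃ (t : ℕ → ℝ) (η : H), Tendsto t atTop atTop ∧
      Tendsto (fun n => σ (t n)) atTop (𝓝 η) ∧ g η = 0 := by
  have horbit : ∀ᶠ t in atTop, σ t ∈ closure (σ '' Ici 0) :=
    (eventually_ge_atTop 0).mono fun t ht => subset_closure (mem_image_of_mem σ ht)
  exact exists_seq_tendsto_of_mapClusterPt_comp hcompact horbit hgcont
    (mapClusterPt_zero_of_gradient_flow hbdd hgrad hΓ hflow)
end

section
/- Let H be a real Hilbert space, F : H → ℝ, and let σ : [0, ∞) → H be differentiable with σ'(t) = −∇F(σ(t)) for all t ≥ 0, where F has gradient ∇F(σ(t)) at each σ(t). Suppose there are constants θ ∈ (0, 1/2], C > 0 and F_∞ ∈ ℝ such that F(σ(t)) ≥ F_∞ and (F(σ(t)) − F_∞)^{1−θ} ≤ C·‖∇F(σ(t))‖ for all t ≥ 0. Then ∫₀^∞ ‖σ'(t)‖ dt ≤ (C/θ)·(F(σ(0)) − F_∞)^θ < ∞, and consequently σ(t) converges in H to some limit η as t → ∞. -/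
open Filter Topology MeasureTheory Set

/-!
Along the flow the energy `E = F ∘ σ - F_∞` satisfies `E' = -‖∇F(σ)‖²`. Where `E > 0` the
Łojasiewicz inequality `E^{1-θ} ≤ C‖∇F(σ)‖` turns this into `‖σ'‖ ≤ -(d/dt) (C/θ) E^θ`; once `E`
vanishes it stays zero, and then `∇F(σ) = 0` since `E` has a minimum there. Integrating, the
length of `σ` on `[0, b]` is at most `(C/θ) E(0)^θ` for every `b`, so `σ'` is integrable on
`[0, ∞)` and `σ` converges in the complete space `H`.
-/

theorem integrableOn_Ioc_and_integral_le_sub_of_hasDeriv_right_of_le {φ φ' u : ℝ → ℝ} {a b : ℝ}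
    (hab : a ≤ b) (hcont : ContinuousOn φ (Icc a b))
    (hderiv : ∀ x ∈ Ioo a b, HasDerivWithinAt φ (φ' x) (Ioi x) x)
    (hu : AEStronglyMeasurable u (volume.restrict (Ioo a b)))
    (hu_nonneg : ∀ x ∈ Ioo a b, 0 ≤ u x) (hu_le : ∀ x ∈ Ioo a b, u x ≤ φ' x) :
    IntegrableOn u (Ioc a b) ∧ ∫ x in a..b, u x ≤ φ b - φ a := by
  have hφ' : IntegrableOn φ' (Ioo a b) := (integrableOn_Ioc_iff_integrableOn_Ioo).1 <|
    intervalIntegral.integrableOn_deriv_right_of_nonneg hcont hderiv fun x hx =>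
      (hu_nonneg x hx).trans (hu_le x hx)
  have hu_int : IntegrableOn u (Ioc a b) := by
    refine (integrableOn_Ioc_iff_integrableOn_Ioo).2 (hφ'.mono' hu ?_)
    refine (ae_restrict_iff' measurableSet_Ioo).2 (Eventually.of_forall fun x hx => ?_)
    rw [Real.norm_of_nonneg (hu_nonneg x hx)]
    exact hu_le x hx
  exact ⟨hu_int, intervalIntegral.integral_le_sub_of_hasDeriv_right_of_le hab hcont hderiv
    ((integrableOn_Icc_iff_integrableOn_Ioc).2 hu_int) hu_le⟩

theorem HasGradientAt.hasDerivAt_comp {H : Type*} [NormedAddCommGroup H] [InnerProductSpace ℝ H]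
    [CompleteSpace H] {F : H → ℝ} {σ : ℝ → H} {v w : H} {t : ℝ} (hF : HasGradientAt F v (σ t))
    (hσ : HasDerivAt σ w t) : HasDerivAt (fun s => F (σ s)) (inner ℝ v w) t :=
  hF.hasFDerivAt.comp_hasDerivAt t hσ

theorem aestronglyMeasurable_restrict_of_hasDerivAt {H : Type*} [NormedAddCommGroup H]
    [NormedSpace ℝ H] [CompleteSpace H] {f f' : ℝ → H} {s : Set ℝ} (hs : MeasurableSet s)
    (hf : ∀ x ∈ s, HasDerivAt f (f' x) x) : AEStronglyMeasurable f' (volume.restrict s) :=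
  (aestronglyMeasurable_deriv f _).congr <|
    (ae_restrict_iff' hs).2 (Eventually.of_forall fun x hx => (hf x hx).deriv)

section Lojasiewicz

variable {E v : ℝ → ℝ} {a θ C : ℝ}

theorem antitoneOn_of_hasDerivAt_neg_sq (hE : ∀ t, a ≤ t → HasDerivAt E (-(v t ^ 2)) t) :
    AntitoneOn E (Ici a) := by
  refine antitoneOn_of_hasDerivWithinAt_nonpos (f' := fun t => -(v t ^ 2)) (convex_Ici a)
    (fun t ht => (hE t ht).continuousAt.continuousWithinAt) (fun t ht => ?_) fun t _ => ?_
  · rw [interior_Ici] at ht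
    exact (hE t (le_of_lt ht)).hasDerivWithinAt
  · exact neg_nonpos.2 (sq_nonneg _)

theorem eq_zero_of_hasDerivAt_neg_sq_of_eq_zero (hE : ∀ t, a ≤ t → HasDerivAt E (-(v t ^ 2)) t)
    (hE_nonneg : ∀ t, a ≤ t → 0 ≤ E t) {t : ℝ} (ht : a < t) (hEt : E t = 0) : v t = 0 := by
  have hmin : IsLocalMin E t := by
    filter_upwards [Ioi_mem_nhds ht] with s hs
    exact hEt ▸ hE_nonneg s (le_of_lt hs)
  simpa using hmin.hasDerivAt_eq_zero (hE t ht.le)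

theorem le_mul_rpow_sub_one_mul_sq {e u : ℝ} (he : 0 < e) (hu : 0 ≤ u)
    (hLS : e ^ (1 - θ) ≤ C * u) : u ≤ C * e ^ (θ - 1) * u ^ 2 := by
  have hinv : e ^ (θ - 1) * e ^ (1 - θ) = 1 := by
    rw [← Real.rpow_add he]
    simp
  calc u = u * (e ^ (θ - 1) * e ^ (1 - θ)) := by rw [hinv, mul_one]
    _ ≤ u * (e ^ (θ - 1) * (C * u)) := by gcongr
    _ = C * e ^ (θ - 1) * u ^ 2 := by ring

-- `E ^ θ` need not be differentiable from the left at a zero of `E`, hence right derivatives.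
theorem hasDerivWithinAt_Ioi_neg_mul_rpow (hθ : θ ≠ 0)
    (hE : ∀ t, a ≤ t → HasDerivAt E (-(v t ^ 2)) t) (hE_nonneg : ∀ t, a ≤ t → 0 ≤ E t)
    {t : ℝ} (ht : a < t) :
    HasDerivWithinAt (fun s => -(C / θ * E s ^ θ)) (C * E t ^ (θ - 1) * v t ^ 2) (Ioi t) t := by
  rcases (hE_nonneg t ht.le).lt_or_eq with hpos | hzero
  · refine HasDerivAt.hasDerivWithinAt ?_
    have hderiv : HasDerivAt (fun s => -(C / θ * E s ^ θ))
        (-(C / θ * (-(v t ^ 2) * θ * E t ^ (θ - 1)))) t :=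
      (((hE t ht.le).rpow_const (p := θ) (Or.inl hpos.ne')).const_mul (C / θ)).neg
    refine hderiv.congr_deriv ?_
    field_simp
  · have hE_eq : ∀ s, t ≤ s → E s = 0 := fun s hs =>
      le_antisymm (hzero ▸ antitoneOn_of_hasDerivAt_neg_sq hE ht.le (ht.le.trans hs) hs)
        (hE_nonneg s (ht.le.trans hs))
    have hvt : v t = 0 := eq_zero_of_hasDerivAt_neg_sq_of_eq_zero hE hE_nonneg ht hzero.symm
    have hzero_rpow : ∀ s, t ≤ s → -(C / θ * E s ^ θ) = 0 := fun s hs => by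
      rw [hE_eq s hs, Real.zero_rpow hθ, mul_zero, neg_zero]
    rw [hvt, zero_pow two_ne_zero, mul_zero]
    exact (hasDerivWithinAt_const t _ 0).congr (fun s hs => hzero_rpow s (le_of_lt hs))
      (hzero_rpow t le_rfl)

theorem integrableOn_Ioc_and_intervalIntegral_le_of_lojasiewicz (hθ : 0 < θ)
    (hE : ∀ t, a ≤ t → HasDerivAt E (-(v t ^ 2)) t) (hE_nonneg : ∀ t, a ≤ t → 0 ≤ E t)
    (hv_nonneg : ∀ t, a ≤ t → 0 ≤ v t) (hLS : ∀ t, a ≤ t → E t ^ (1 - θ) ≤ C * v t)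
    (hv : AEStronglyMeasurable v (volume.restrict (Ioi a))) {b : ℝ} (hab : a ≤ b) :
    IntegrableOn v (Ioc a b) ∧ ∫ t in a..b, v t ≤ C / θ * (E a ^ θ - E b ^ θ) := by
  have hcont : ContinuousOn (fun s => -(C / θ * E s ^ θ)) (Icc a b) := by
    have hE_cont : ContinuousOn E (Icc a b) := fun t ht =>
      (hE t ht.1).continuousAt.continuousWithinAt
    exact (continuousOn_const.mul (hE_cont.rpow_const fun _ _ => Or.inr hθ.le)).neg
  have hv_le : ∀ t ∈ Ioo a b, v t ≤ C * E t ^ (θ - 1) * v t ^ 2 := fun t ht => by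
    rcases (hE_nonneg t ht.1.le).lt_or_eq with hpos | hzero
    · exact le_mul_rpow_sub_one_mul_sq hpos (hv_nonneg t ht.1.le) (hLS t ht.1.le)
    · simp [eq_zero_of_hasDerivAt_neg_sq_of_eq_zero hE hE_nonneg ht.1 hzero.symm]
  obtain ⟨hint, hle⟩ := integrableOn_Ioc_and_integral_le_sub_of_hasDeriv_right_of_le hab hcont
    (fun t ht => hasDerivWithinAt_Ioi_neg_mul_rpow hθ.ne' hE hE_nonneg ht.1)
    (hv.mono_measure (Measure.restrict_mono Ioo_subset_Ioi_self le_rfl))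
    (fun t ht => hv_nonneg t ht.1.le) hv_le
  exact ⟨hint, hle.trans_eq (by ring)⟩

theorem integrableOn_Ioi_and_integral_le_of_lojasiewicz (hθ : 0 < θ) (hC : 0 ≤ C)
    (hE : ∀ t, a ≤ t → HasDerivAt E (-(v t ^ 2)) t) (hE_nonneg : ∀ t, a ≤ t → 0 ≤ E t)
    (hv_nonneg : ∀ t, a ≤ t → 0 ≤ v t) (hLS : ∀ t, a ≤ t → E t ^ (1 - θ) ≤ C * v t)
    (hv : AEStronglyMeasurable v (volume.restrict (Ioi a))) :
    IntegrableOn v (Ioi a) ∧ ∫ t in Ioi a, v t ≤ C / θ * E a ^ θ := by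
  have hbound : ∀ b, a ≤ b → ∫ t in a..b, v t ≤ C / θ * E a ^ θ := fun b hab => by
    have hEb : 0 ≤ C / θ * E b ^ θ :=
      mul_nonneg (div_nonneg hC hθ.le) (Real.rpow_nonneg (hE_nonneg b hab) θ)
    have := (integrableOn_Ioc_and_intervalIntegral_le_of_lojasiewicz hθ hE hE_nonneg hv_nonneg
      hLS hv hab).2
    linarith
  have hlen : Tendsto (fun n : ℕ => a + n) atTop atTop :=
    tendsto_atTop_add_const_left _ _ tendsto_natCast_atTop_atTop
  have hint : IntegrableOn v (Ioi a) := by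
    refine integrableOn_Ioi_of_intervalIntegral_norm_bounded (C / θ * E a ^ θ) a (fun n =>
      (integrableOn_Ioc_and_intervalIntegral_le_of_lojasiewicz hθ hE hE_nonneg hv_nonneg hLS hv
        (le_add_of_nonneg_right n.cast_nonneg)).1) hlen (Eventually.of_forall fun n => ?_)
    have hab : a ≤ a + n := le_add_of_nonneg_right n.cast_nonneg
    rw [intervalIntegral.integral_congr fun t ht =>
      Real.norm_of_nonneg (hv_nonneg t (by rw [uIcc_of_le hab] at ht; exact ht.1))]
    exact hbound _ hab
  refine ⟨hint, le_of_tendsto (intervalIntegral_tendsto_integral_Ioi a hint hlen) ?_⟩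
  exact Eventually.of_forall fun n => hbound _ (le_add_of_nonneg_right n.cast_nonneg)

end Lojasiewicz

/-- Łojasiewicz–Simon convergence: if `σ' = −∇F(σ)` and along the trajectory
`F(σ(t)) ≥ F_∞` together with the gradient inequality
`(F(σ(t)) − F_∞)^{1−θ} ≤ C‖∇F(σ(t))‖`, then the trajectory has finite length
`∫₀^∞ ‖σ'‖ ≤ (C/θ)(F(σ(0)) − F_∞)^θ` and converges to a limit `η`. -/
theorem lojasiewicz_simon_finite_length_and_convergence
    {H : Type*} [NormedAddCommGroup H] [InnerProductSpace ℝ H] [CompleteSpace H]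
    (F : H → ℝ) (σ : ℝ → H) (g : ℝ → H)
    (hgrad : ∀ t : ℝ, 0 ≤ t → HasGradientAt F (g t) (σ t))
    (hflow : ∀ t : ℝ, 0 ≤ t → HasDerivAt σ (-(g t)) t)
    (θ C Finf : ℝ) (hθ : θ ∈ Set.Ioc (0 : ℝ) (1 / 2)) (hC : 0 < C)
    (hlower : ∀ t : ℝ, 0 ≤ t → Finf ≤ F (σ t))
    (hLS : ∀ t : ℝ, 0 ≤ t → (F (σ t) - Finf) ^ (1 - θ) ≤ C * ‖g t‖) :
    IntegrableOn (fun t => ‖g t‖) (Set.Ioi (0 : ℝ)) ∧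
    (∫ t in Set.Ioi (0 : ℝ), ‖g t‖) ≤ (C / θ) * (F (σ 0) - Finf) ^ θ ∧
    ∃ η : H, Tendsto σ atTop (𝓝 η) := by
  have hE : ∀ t, 0 ≤ t → HasDerivAt (fun s => F (σ s) - Finf) (-(‖g t‖ ^ 2)) t := fun t ht => by
    simpa [inner_neg_right, real_inner_self_eq_norm_sq] using
      ((hgrad t ht).hasDerivAt_comp (hflow t ht)).sub_const Finf
  have hg_meas : AEStronglyMeasurable g (volume.restrict (Ioi 0)) :=
    (aestronglyMeasurable_restrict_of_hasDerivAt measurableSet_Ioi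
      fun t (ht : 0 < t) => hflow t ht.le).neg.congr (ae_of_all _ fun t => neg_neg (g t))
  obtain ⟨hint, hbound⟩ := integrableOn_Ioi_and_integral_le_of_lojasiewicz hθ.1 hC.le hE
    (fun t ht => sub_nonneg.2 (hlower t ht)) (fun t _ => norm_nonneg _) hLS hg_meas.norm
  have hg_int : IntegrableOn g (Ioi 0) := (integrable_norm_iff hg_meas).1 hint
  exact ⟨hint, hbound, _, tendsto_limUnder_of_hasDerivAt_of_integrableOn_Ioi
    (fun t (ht : 0 < t) => hflow t ht.le) hg_int.neg⟩
end
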